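/- Let k ≥ 2 and let m be an integer with 1 ≤ m ≤ k−1. There exists a bijection f from the set of m-dimensional ℤ/2ℤ-subspaces of (ℤ/2ℤ)^k to the set of (k−m)-dimensional ℤ/2ℤ-subspaces of (ℤ/2ℤ)^k such that for every m-dimensional subspace H, the intersection H ∩ f(H) is the zero subspace. In particular, the number of such pairs (H, f(H)) equals the Gaussian binomial coefficient binom(k,m)_2. -/

import Mathlib

/-!
Over `𝔽_q`, subspaces of complementary dimensions `m` and `n - m` intersect trivially exactly when
they are complements, and an `m`-dimensional subspace has `q ^ (m * (n - m))` complements, which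
correspond to the linear maps from one fixed complement into it. The bipartite graph "intersects
trivially" between the two Grassmannians is therefore regular of the same degree on both sides,
so Hall's theorem yields a perfect matching. The Gaussian binomial count comes from grouping the
linearly independent `m`-tuples of `𝔽_q^n` by their span.
-/

open Finset Module Submodule

theorem Finset.prod_Icc_one_eq_prod_range {M : Type*} [CommMonoid M] (f : ℕ → M) (m : ℕ) :
    ∏ i ∈ Icc 1 m, f i = ∏ i ∈ range m, f (i + 1) := by
  rw [range_eq_Ico, prod_Ico_add', zero_add, Ico_add_one_right_eq_Icc]

theorem Nat.prod_range_pow_sub_pow (q : ℕ) {m n : ℕ} (h : m ≤ n) :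
    ∏ i ∈ range m, (q ^ n - q ^ i) =
      q ^ (∑ i ∈ range m, i) * ∏ i ∈ range m, (q ^ (n - i) - 1) := by
  rw [← prod_pow_eq_pow_sum, ← prod_mul_distrib]
  refine prod_congr rfl fun i hi => ?_
  rw [Nat.mul_sub, mul_one, ← pow_add, Nat.add_sub_cancel' (by have := mem_range.1 hi; omega)]

theorem exists_injective_forall_rel_of_card_le {α β : Type*} [Finite α] [Finite β]
    (r : α → β → Prop) {d : ℕ} (hd : 0 < d)
    (hα : ∀ a, d ≤ Nat.card {b // r a b}) (hβ : ∀ b, Nat.card {a // r a b} ≤ d) :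
    ∃ f : α → β, Function.Injective f ∧ ∀ a, r a (f a) := by
  classical
  cases nonempty_fintype α
  cases nonempty_fintype β
  refine (Fintype.all_card_le_filter_rel_iff_exists_injective r).1 fun A => ?_
  refine Nat.le_of_mul_le_mul_right (card_mul_le_card_mul r (m := d) (n := d) ?_ ?_) hd
  · intro a ha
    have hN : ({b | ∃ a ∈ A, r a b} : Finset β).bipartiteAbove r a =
        ({b | r a b} : Finset β) := by
      refine Finset.ext fun b => ?_
      simp only [mem_bipartiteAbove, mem_filter, mem_univ, true_and, and_iff_right_iff_imp]
      exact fun hab => ⟨a, ha, hab⟩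
    rw [hN, ← Fintype.card_subtype, ← Nat.card_eq_fintype_card]
    exact hα a
  · intro b _
    calc #(A.bipartiteBelow r b) ≤ #({a | r a b} : Finset α) :=
          card_le_card (filter_subset_filter _ (subset_univ A))
      _ ≤ d := by rw [← Fintype.card_subtype, ← Nat.card_eq_fintype_card]; exact hβ b

theorem exists_equiv_forall_rel_of_regular {α β : Type*} [Finite α] [Finite β]
    (r : α → β → Prop) {d : ℕ} (hd : 0 < d)
    (hα : ∀ a, Nat.card {b // r a b} = d) (hβ : ∀ b, Nat.card {a // r a b} = d) :
    ∃ f : α ≃ β, ∀ a, r a (f a) := by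
  obtain ⟨f, hf, hrf⟩ :=
    exists_injective_forall_rel_of_card_le r hd (fun a => (hα a).ge) (fun b => (hβ b).le)
  obtain ⟨g, hg, -⟩ :=
    exists_injective_forall_rel_of_card_le (flip r) hd (fun b => (hβ b).ge) (fun a => (hα a).le)
  exact ⟨.ofBijective f (hf.bijective_of_nat_card_le (Nat.card_le_card_of_injective g hg)), hrf⟩

namespace Submodule

variable {R E : Type*} [Ring R] [AddCommGroup E] [Module R E]

/-- A complement `q'` of `p` goes to the restriction to `q` of the projection to `p` along `q'`. -/
noncomputable def isComplEquivLinearMap {p q : Submodule R E} (h : IsCompl p q) :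
    {q' // IsCompl p q'} ≃ (q →ₗ[R] p) :=
  p.isComplEquivProj.trans
    { toFun := fun f => f.1 ∘ₗ q.subtype
      invFun := fun g => ⟨p.projectionOnto q h + g ∘ₗ q.projectionOnto p h.symm, fun x => by
        simp [projectionOnto_apply_left, projectionOnto_apply_right]⟩
      left_inv := by
        rintro ⟨f, hf⟩
        ext x
        have hfp : f (p.projection q h x) = p.projectionOnto q h x := hf _
        simp only [LinearMap.add_apply, LinearMap.comp_apply, coe_subtype, coe_projectionOnto_apply]
        rw [← hfp, ← map_add, projection_add_projection_eq_self]
      right_inv := fun g => by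
        ext x
        simp [projectionOnto_apply_left, projectionOnto_apply_right] }

end Submodule

section FiniteDimensional

variable {K V : Type*} [Field K] [AddCommGroup V] [Module K V] [FiniteDimensional K V]

theorem Submodule.isCompl_iff_finrank_eq_and_disjoint {p q : Submodule K V} {d : ℕ}
    (h : finrank K p + d = finrank K V) : IsCompl p q ↔ finrank K q = d ∧ Disjoint p q :=
  ⟨fun hpq => ⟨by have := finrank_add_eq_of_isCompl hpq; omega, hpq.disjoint⟩,
    fun ⟨_, hpq⟩ => (isCompl_iff_disjoint p q (by omega)).2 hpq⟩

noncomputable def linearIndependentSpanEquiv {m : ℕ} (W : Submodule K V) (hW : finrank K W = m) :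
    {v : {v : Fin m → V // LinearIndependent K v} // span K (Set.range v.1) = W} ≃
      {u : Fin m → W // LinearIndependent K u} where
  toFun v := ⟨fun i => ⟨v.1.1 i, v.2.le (subset_span (Set.mem_range_self i))⟩,
    .of_comp W.subtype v.1.2⟩
  invFun u := ⟨⟨W.subtype ∘ u.1, u.2.map' W.subtype W.ker_subtype⟩, by
    have htop : span K (Set.range u.1) = ⊤ := eq_top_of_finrank_eq <| by
      rw [finrank_span_eq_card u.2, Fintype.card_fin, hW]
    rw [Set.range_comp, span_image, htop, map_subtype_top]⟩
  left_inv _ := rfl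
  right_inv _ := rfl

end FiniteDimensional

section FiniteField

variable {K V : Type*} [Field K] [Fintype K] [AddCommGroup V] [Module K V] [Finite V]

local notation "q" => Fintype.card K
local notation "n" => finrank K V

theorem Submodule.card_isCompl (p : Submodule K V) :
    Nat.card {p' // IsCompl p p'} = q ^ (finrank K p * (n - finrank K p)) := by
  obtain ⟨p', hp'⟩ := p.exists_isCompl
  rw [Nat.card_congr (isComplEquivLinearMap hp'), Module.natCard_eq_pow_finrank (K := K),
    Module.finrank_linearMap, Nat.card_eq_fintype_card, ← finrank_add_eq_of_isCompl hp',
    Nat.add_sub_cancel_left, mul_comm]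

theorem Submodule.card_disjoint_of_finrank_add_eq (p : Submodule K V) {d : ℕ}
    (h : finrank K p + d = n) :
    Nat.card {p' : {p' : Submodule K V // finrank K p' = d} // Disjoint p p'.1} =
      q ^ (finrank K p * d) := by
  rw [Nat.card_congr ((Equiv.subtypeSubtypeEquivSubtypeInter _ _).trans
    (Equiv.subtypeEquivRight fun _ => (isCompl_iff_finrank_eq_and_disjoint h).symm)),
    card_isCompl, ← h, Nat.add_sub_cancel_left]

theorem card_finrank_eq_mul_prod {m : ℕ} (hm : m ≤ n) :
    Nat.card {W : Submodule K V // finrank K W = m} * ∏ i ∈ range m, (q ^ m - q ^ i) =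
      ∏ i ∈ range m, (q ^ n - q ^ i) := by
  classical
  let π (v : {v : Fin m → V // LinearIndependent K v}) :
      {W : Submodule K V // finrank K W = m} :=
    ⟨span K (Set.range v.1), by rw [finrank_span_eq_card v.2, Fintype.card_fin]⟩
  have hfibre (W) : Nat.card {v // π v = W} = ∏ i ∈ range m, (q ^ m - q ^ i) := by
    rw [Nat.card_congr ((Equiv.subtypeEquivRight fun v => Subtype.ext_iff).trans
      (linearIndependentSpanEquiv W.1 W.2)), card_linearIndependent W.2.ge, W.2,
      Fin.prod_univ_eq_prod_range (fun i => q ^ m - q ^ i)]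
  have := Fintype.ofFinite {W : Submodule K V // finrank K W = m}
  rw [← Fin.prod_univ_eq_prod_range (fun i => q ^ n - q ^ i), ← card_linearIndependent hm,
    Nat.card_congr (Equiv.sigmaFiberEquiv π).symm, Nat.card_sigma,
    Finset.sum_congr rfl fun W _ => hfibre W, sum_const, card_univ, smul_eq_mul,
    Nat.card_eq_fintype_card]

theorem card_finrank_eq_mul_prod_Icc {m : ℕ} (hm : m ≤ n) :
    Nat.card {W : Submodule K V // finrank K W = m} * ∏ i ∈ Icc 1 m, (q ^ i - 1) =
      ∏ i ∈ Icc 1 m, (q ^ (n - i + 1) - 1) := by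
  have hframes := card_finrank_eq_mul_prod (K := K) (V := V) hm
  rw [Nat.prod_range_pow_sub_pow q le_rfl, Nat.prod_range_pow_sub_pow q hm, mul_left_comm]
    at hframes
  have hleft : ∏ i ∈ range m, (q ^ (m - i) - 1) = ∏ i ∈ Icc 1 m, (q ^ i - 1) := by
    rw [prod_Icc_one_eq_prod_range, ← prod_range_reflect]
    refine prod_congr rfl fun i hi => ?_
    rw [mem_range] at hi
    congr 2; omega
  have hright :
      ∏ i ∈ range m, (q ^ (n - i) - 1) = ∏ i ∈ Icc 1 m, (q ^ (n - i + 1) - 1) := by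
    rw [prod_Icc_one_eq_prod_range]
    refine prod_congr rfl fun i hi => ?_
    rw [mem_range] at hi
    congr 2; omega
  rw [← hleft, ← hright]
  exact Nat.eq_of_mul_eq_mul_left (pow_pos Fintype.card_pos _) hframes

theorem exists_equiv_finrank_eq_forall_disjoint {m d : ℕ} (h : m + d = n) :
    ∃ f : {W : Submodule K V // finrank K W = m} ≃ {W : Submodule K V // finrank K W = d},
      ∀ W, Disjoint W.1 (f W).1 := by
  refine exists_equiv_forall_rel_of_regular (fun (W : {W : Submodule K V // finrank K W = m})
    (W' : {W : Submodule K V // finrank K W = d}) => Disjoint W.1 W'.1)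
    (d := q ^ (m * d)) (pow_pos Fintype.card_pos _) (fun W => ?_) (fun W' => ?_)
  · rw [W.1.card_disjoint_of_finrank_add_eq (by rw [W.2, h]), W.2]
  · rw [Nat.card_congr (Equiv.subtypeEquivRight fun _ => disjoint_comm),
      W'.1.card_disjoint_of_finrank_add_eq (by rw [W'.2, add_comm, h]), W'.2, mul_comm]

end FiniteField

theorem exists_matching_complementary_dimensions_general (k m : ℕ)
    (hm2 : m ≤ k - 1) :
    (∃ f : {H : Submodule (ZMod 2) (Fin k → ZMod 2) //
              Module.finrank (ZMod 2) H = m} ≃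
           {S : Submodule (ZMod 2) (Fin k → ZMod 2) //
              Module.finrank (ZMod 2) S = k - m},
      ∀ H, H.1 ⊓ (f H).1 = ⊥) ∧
    Nat.card {H : Submodule (ZMod 2) (Fin k → ZMod 2) //
        Module.finrank (ZMod 2) H = m} *
      ∏ i ∈ Finset.Icc 1 m, (2 ^ i - 1) =
      ∏ i ∈ Finset.Icc 1 m, (2 ^ (k - i + 1) - 1) := by
  have hmk : m ≤ finrank (ZMod 2) (Fin k → ZMod 2) := by rw [finrank_fin_fun]; omega
  refine ⟨?_, ?_⟩
  · obtain ⟨f, hf⟩ := exists_equiv_finrank_eq_forall_disjoint (K := ZMod 2)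
      (V := Fin k → ZMod 2) (m := m) (d := k - m) (by rw [finrank_fin_fun]; omega)
    exact ⟨f, fun H => (hf H).eq_bot⟩
  · simpa only [ZMod.card, finrank_fin_fun] using card_finrank_eq_mul_prod_Icc hmk

/-- For `k ≥ 2` and `1 ≤ m ≤ k - 1`, there is a bijection `f`
from the `m`-dimensional subspaces of `(ℤ/2ℤ)^k` to its `(k-m)`-dimensional
subspaces such that `H ∩ f H = {0}` for every `H`. In particular the number of
such pairs, i.e. the number of `m`-dimensional subspaces, is the Gaussian
binomial `binom(k,m)_2`, expressed by the product identity below. -/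
theorem exists_matching_complementary_dimensions (k m : ℕ) (hk : 2 ≤ k)
    (hm1 : 1 ≤ m) (hm2 : m ≤ k - 1) :
    (∃ f : {H : Submodule (ZMod 2) (Fin k → ZMod 2) //
              Module.finrank (ZMod 2) H = m} ≃
           {S : Submodule (ZMod 2) (Fin k → ZMod 2) //
              Module.finrank (ZMod 2) S = k - m},
      ∀ H, H.1 ⊓ (f H).1 = ⊥) ∧
    Nat.card {H : Submodule (ZMod 2) (Fin k → ZMod 2) //
        Module.finrank (ZMod 2) H = m} *
      ∏ i ∈ Finset.Icc 1 m, (2 ^ i - 1) =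
      ∏ i ∈ Finset.Icc 1 m, (2 ^ (k - i + 1) - 1) :=
  exists_matching_complementary_dimensions_general k m hm2
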